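/- arXiv:math/0702207 — 9 statements merged into one kernel-verified Lean document; each statement's English description precedes it below -/
import Mathlib

section
/- Every finite simple graph G embeds as an induced subgraph into a finite simple graph H such that every partial isomorphism of G extends to an automorphism of H. Precisely: for every simple graph G on a finite vertex set V there exist a finite simple graph H on a vertex set W and a graph embedding f : G ↪ H (injective on vertices, with u and v adjacent in G if and only if f(u) and f(v) are adjacent in H) such that for every subset A ⊆ V and every injective map p : A → V satisfying (a adjacent to b in G if and only if p(a) adjacent to p(b) in G, for all a, b ∈ A), there exists a graph automorphism j of H with j (f a) = f (p a) for all a ∈ A. -/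
/-!
Take as vertices the pairs `(u, f)` with `u : V` and `f : V → Bool`, and join `(u, f)` to `(v, g)`
when `u ≠ v` and `f v ≠ g u`. If `χ u v ^^ χ v u` records adjacency in `G` (e.g. `χ` an orientation
of the edges), then `u ↦ (u, χ u)` embeds `G`. Every permutation `σ` of `V` acts on this graph, and so
does every switching `(u, f) ↦ (u, f ^^ t u)` along a symmetric `t`. Extend a partial isomorphism `p`
to a permutation `σ`; the point `(a, χ a)` is sent to `(σ a, χ (σ a))` as soon as
`t a v = χ a v ^^ χ (σ a) (σ v)`, and this prescription for `t` is symmetric on `A × A` exactly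
because `p` preserves adjacency there.
-/

theorem Set.InjOn.exists_perm_eqOn {V : Type*} [Finite V] {A : Set V} {p : V → V}
    (hp : A.InjOn p) : ∃ σ : Equiv.Perm V, A.EqOn σ p := by
  have := Fintype.ofFinite V
  obtain ⟨g, hg⟩ := Set.MapsTo.exists_equiv_extend_of_card_eq (t := Finset.univ)
    Finset.card_univ.symm (fun _ _ => Finset.mem_coe.2 (Finset.mem_univ _)) hp
  exact ⟨g.trans (Equiv.subtypeUnivEquiv Finset.mem_univ), hg⟩

theorem exists_symm_extend {V β : Type*} [Nonempty β] (A : Set V) (c : V → V → β)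
    (hc : ∀ a ∈ A, ∀ b ∈ A, c a b = c b a) :
    ∃ t : V → V → β, (∀ u v, t u v = t v u) ∧ ∀ a ∈ A, ∀ v, t a v = c a v := by
  classical
  refine ⟨fun u v => if u ∈ A then c u v else if v ∈ A then c v u else Classical.arbitrary β,
    fun u v => ?_, fun a ha v => if_pos ha⟩
  by_cases hu : u ∈ A <;> by_cases hv : v ∈ A <;> simp [hu, hv, hc]

namespace SimpleGraph

variable {V : Type*}

def hrushovskiGraph (V : Type*) : SimpleGraph (V × (V → Bool)) where
  Adj x y := x.1 ≠ y.1 ∧ x.2 y.1 ≠ y.2 x.1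
  symm := ⟨fun _ _ h => ⟨h.1.symm, h.2.symm⟩⟩
  loopless := ⟨fun _ h => h.1 rfl⟩

namespace hrushovskiGraph

@[simp]
theorem adj_iff {x y : V × (V → Bool)} :
    (hrushovskiGraph V).Adj x y ↔ x.1 ≠ y.1 ∧ x.2 y.1 ≠ y.2 x.1 :=
  Iff.rfl

def relabel (σ : Equiv.Perm V) : hrushovskiGraph V ≃g hrushovskiGraph V where
  toEquiv := σ.prodCongr (σ.arrowCongr (Equiv.refl Bool))
  map_rel_iff' := by simp

def switch (t : V → V → Bool) (ht : ∀ u v, t u v = t v u) :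
    hrushovskiGraph V ≃g hrushovskiGraph V where
  toEquiv := Function.Involutive.toPerm (fun x => (x.1, fun v => x.2 v ^^ t x.1 v))
    fun x => by simp
  map_rel_iff' := by simp [ht]

end hrushovskiGraph

def IsXorOrientation (G : SimpleGraph V) (χ : V → V → Bool) : Prop :=
  ∀ u v, (χ u v ^^ χ v u) = true ↔ G.Adj u v

theorem exists_isXorOrientation (G : SimpleGraph V) : ∃ χ, G.IsXorOrientation χ := by
  classical
  refine ⟨fun u v => decide (G.Adj u v ∧ WellOrderingRel u v), fun u v => ?_⟩
  by_cases h : G.Adj u v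
  · rcases trichotomous_of WellOrderingRel u v with r | rfl | r
    · simp [h, h.symm, r, asymm r]
    · exact absurd h (G.loopless.irrefl _)
    · simp [h, h.symm, r, asymm r]
  · simp [h, G.adj_comm v u]

namespace IsXorOrientation

variable {G : SimpleGraph V} {χ : V → V → Bool}

def embedding (hχ : G.IsXorOrientation χ) : G ↪g hrushovskiGraph V where
  toFun u := (u, χ u)
  inj' _ _ h := congrArg Prod.fst h
  map_rel_iff' {u v} := by
    show u ≠ v ∧ χ u v ≠ χ v u ↔ G.Adj u v
    rw [← hχ u v]
    by_cases huv : u = v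
    · simp [huv]
    · cases χ u v <;> cases χ v u <;> simp [huv]

theorem xor_symm_of_adj_iff (hχ : G.IsXorOrientation χ) {a b a' b' : V}
    (h : G.Adj a b ↔ G.Adj a' b') : (χ a b ^^ χ a' b') = (χ b a ^^ χ b' a') := by
  have hab : (χ a b ^^ χ b a) = (χ a' b' ^^ χ b' a') := by
    rw [Bool.eq_iff_iff, hχ, hχ, h]
  revert hab
  cases χ a b <;> cases χ b a <;> cases χ a' b' <;> cases χ b' a' <;> decide

theorem exists_iso_extend [Finite V] (hχ : G.IsXorOrientation χ) {A : Set V} {p : V → V}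
    (hp : A.InjOn p) (hG : ∀ a ∈ A, ∀ b ∈ A, (G.Adj a b ↔ G.Adj (p a) (p b))) :
    ∃ j : hrushovskiGraph V ≃g hrushovskiGraph V,
      ∀ a ∈ A, j (hχ.embedding a) = hχ.embedding (p a) := by
  obtain ⟨σ, hσ⟩ := hp.exists_perm_eqOn
  obtain ⟨t, ht, hta⟩ := exists_symm_extend A (fun u v => χ u v ^^ χ (σ u) (σ v))
    fun a ha b hb => by simpa only [hσ ha, hσ hb] using hχ.xor_symm_of_adj_iff (hG a ha b hb)
  refine ⟨(hrushovskiGraph.switch t ht).trans (hrushovskiGraph.relabel σ), fun a ha => ?_⟩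
  refine Prod.ext (hσ ha) (funext fun w => ?_)
  show (χ a (σ.symm w) ^^ t a (σ.symm w)) = χ (p a) w
  rw [hta a ha, ← hσ ha, ← Bool.xor_assoc, Bool.xor_self, Bool.false_xor, Equiv.apply_symm_apply]

end IsXorOrientation

end SimpleGraph

/-- **Hrushovski's theorem.** Every finite simple graph `G` embeds as an induced subgraph
into a finite simple graph `H` such that every partial isomorphism of `G` extends to an
automorphism of `H`. -/
theorem hrushovski {V : Type} [Finite V] (G : SimpleGraph V) :
    ∃ (W : Type) (_ : Finite W) (H : SimpleGraph W) (f : V → W),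
      Function.Injective f ∧
      (∀ u v : V, G.Adj u v ↔ H.Adj (f u) (f v)) ∧
      ∀ (A : Set V) (p : V → V),
        Set.InjOn p A →
        (∀ a ∈ A, ∀ b ∈ A, (G.Adj a b ↔ G.Adj (p a) (p b))) →
        ∃ j : H ≃g H, ∀ a ∈ A, j (f a) = f (p a) := by
  obtain ⟨χ, hχ⟩ := G.exists_isXorOrientation
  exact ⟨_, inferInstance, _, hχ.embedding, hχ.embedding.injective,
    fun _ _ => hχ.embedding.map_adj_iff.symm, fun _ _ hp hG => hχ.exists_iso_extend hp hG⟩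
end

section
/- Let X be a complete separable metric space with the Hrushovski–Solecki–Vershik property. Then X is ultrahomogeneous: every distance-preserving bijection between two finite subsets of X extends to a distance-preserving bijection of X onto itself. -/
/-- A metric space `X` has the *Hrushovski–Solecki–Vershik property* if for every finite
subset `Y` of `X` there exists a finite subset `Z` with `Y ⊆ Z ⊆ X` such that every
partial isometry of `Y` (distance-preserving bijection between two subsets of `Y`)
extends to a distance-preserving bijection of `Z` onto itself. -/
def HSVProperty (X : Type*) [MetricSpace X] : Prop :=
  ∀ Y : Set X, Y.Finite →
    ∃ (Z : Set X) (_ : Z.Finite) (hYZ : Y ⊆ Z),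
      ∀ (A B : Set X) (hAY : A ⊆ Y), B ⊆ Y →
        ∀ p : X → X, Set.BijOn p A B →
          (∀ a ∈ A, ∀ b ∈ A, dist (p a) (p b) = dist a b) →
          ∃ j : Z ≃ᵢ Z, ∀ a, ∀ ha : a ∈ A, (j ⟨a, hYZ (hAY ha)⟩ : X) = p a

open Set

section Ext

variable {X : Type*} [MetricSpace X]

/-- Extend an isometric self-bijection of a dense subset of a complete metric space to
a global isometry. -/
lemma extend_isometry [CompleteSpace X] (W : Set X) (hW : Dense W)
    (f : X → X) (hbij : Set.BijOn f W W)
    (hiso : ∀ a ∈ W, ∀ b ∈ W, dist (f a) (f b) = dist a b) :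
    ∃ e : X ≃ᵢ X, ∀ a ∈ W, e a = f a := by
  rcases isEmpty_or_nonempty X with hX | hX
  · exact ⟨IsometryEquiv.refl X, fun a _ => (IsEmpty.false a).elim⟩
  set g : X → X := Function.invFunOn f W with hg
  have hinv : Set.InvOn g f W W := hbij.invOn_invFunOn
  have hbij' : Set.BijOn g W W := Set.BijOn.symm hinv.symm hbij
  have hiso' : ∀ a ∈ W, ∀ b ∈ W, dist (g a) (g b) = dist a b := by
    intro a ha b hb
    have hga : g a ∈ W := hbij'.mapsTo ha
    have hgb : g b ∈ W := hbij'.mapsTo hb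
    rw [← hiso _ hga _ hgb, hinv.2 ha, hinv.2 hb]
  -- uniform extension machinery
  have hι : IsUniformInducing ((↑) : W → X) := isometry_subtype_coe.isUniformInducing
  have hdense : DenseRange ((↑) : W → X) := hW.denseRange_val
  have hfW : UniformContinuous (fun w : W => f w) := by
    apply Isometry.uniformContinuous
    apply Isometry.of_dist_eq
    intro x y
    rw [Subtype.dist_eq]
    exact hiso _ x.2 _ y.2
  have hgW : UniformContinuous (fun w : W => g w) := by
    apply Isometry.uniformContinuous
    apply Isometry.of_dist_eq
    intro x y
    rw [Subtype.dist_eq]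
    exact hiso' _ x.2 _ y.2
  set F : X → X := (hι.isDenseInducing hdense).extend (fun w : W => f w) with hF
  set G : X → X := (hι.isDenseInducing hdense).extend (fun w : W => g w) with hG
  have hFc : Continuous F := (uniformContinuous_uniformly_extend hι hdense hfW).continuous
  have hGc : Continuous G := (uniformContinuous_uniformly_extend hι hdense hgW).continuous
  have hFe : ∀ a ∈ W, F a = f a := fun a ha =>
    uniformly_extend_of_ind hι hdense hfW ⟨a, ha⟩
  have hGe : ∀ a ∈ W, G a = g a := fun a ha =>
    uniformly_extend_of_ind hι hdense hgW ⟨a, ha⟩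
  have h1 : G ∘ F = id := by
    apply Continuous.ext_on hW (hGc.comp hFc) continuous_id
    intro x hx
    show G (F x) = x
    rw [hFe x hx, hGe _ (hbij.mapsTo hx)]
    exact hinv.1 hx
  have h2 : F ∘ G = id := by
    apply Continuous.ext_on hW (hFc.comp hGc) continuous_id
    intro x hx
    show F (G x) = x
    rw [hGe x hx, hFe _ (hbij'.mapsTo hx)]
    exact hinv.2 hx
  have hdist : ∀ x y : X, dist (F x) (F y) = dist x y := by
    have hc1 : Continuous fun q : X × X => dist (F q.1) (F q.2) :=
      Continuous.dist (hFc.comp continuous_fst) (hFc.comp continuous_snd)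
    have hc2 : Continuous fun q : X × X => dist q.1 q.2 := continuous_dist
    have heq : (fun q : X × X => dist (F q.1) (F q.2)) = fun q : X × X => dist q.1 q.2 := by
      apply Continuous.ext_on (hW.prod hW) hc1 hc2
      rintro ⟨x, y⟩ ⟨hx, hy⟩
      simp only
      rw [hFe x hx, hFe y hy]
      exact hiso x hx y hy
    intro x y
    exact congrFun heq (x, y)
  refine ⟨⟨⟨F, G, fun x => congrFun h1 x, fun x => congrFun h2 x⟩,
    Isometry.of_dist_eq hdist⟩, fun a ha => hFe a ha⟩

/-- State for the inductive construction. -/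
structure HSVSt (X : Type*) [MetricSpace X] where
  Z : Set X
  fin : Z.Finite
  j : X → X
  bij : Set.BijOn j Z Z
  iso : ∀ a ∈ Z, ∀ b ∈ Z, dist (j a) (j b) = dist a b

/-- Turn an isometry of a subtype of a finite set into an `HSVSt`. -/
lemma HSVSt.mk' (Z : Set X) (fin : Z.Finite) (e : Z ≃ᵢ Z) :
    ∃ t : HSVSt X, t.Z = Z ∧ ∀ a, ∀ ha : a ∈ Z, t.j a = e ⟨a, ha⟩ := by
  classical
  set J : X → X := fun y => if hy : y ∈ Z then (e ⟨y, hy⟩ : X) else y with hJ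
  have hJeq : ∀ a, ∀ ha : a ∈ Z, J a = e ⟨a, ha⟩ := by
    intro a ha; simp only [hJ, dif_pos ha]
  have hmaps : Set.MapsTo J Z Z := by
    intro a ha; rw [hJeq a ha]; exact (e ⟨a, ha⟩).2
  have hiso : ∀ a ∈ Z, ∀ b ∈ Z, dist (J a) (J b) = dist a b := by
    intro a ha b hb
    rw [hJeq a ha, hJeq b hb, ← Subtype.dist_eq, e.dist_eq, Subtype.dist_eq]
  have hinj : Set.InjOn J Z := by
    intro a ha b hb hab
    have : dist a b = 0 := by rw [← hiso a ha b hb, hab, dist_self]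
    exact dist_eq_zero.mp this
  have hsurj : Set.SurjOn J Z Z := by
    intro b hb
    refine ⟨e.symm ⟨b, hb⟩, (e.symm ⟨b, hb⟩).2, ?_⟩
    rw [hJeq _ (e.symm ⟨b, hb⟩).2]
    simp
  exact ⟨⟨Z, fin, J, ⟨hmaps, hinj, hsurj⟩, hiso⟩, rfl, hJeq⟩

/-- One step of the construction: enlarge the set to include a new point while
extending the isometry. -/
lemma hsv_step (h : HSVProperty X) (s : HSVSt X) (x : X) :
    ∃ t : HSVSt X, s.Z ∪ {x} ⊆ t.Z ∧ ∀ a ∈ s.Z, t.j a = s.j a := by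
  obtain ⟨Z, hZfin, hYZ, key⟩ := h (s.Z ∪ {x}) (s.fin.union (Set.finite_singleton x))
  obtain ⟨e, he⟩ := key s.Z s.Z Set.subset_union_left Set.subset_union_left s.j s.bij s.iso
  obtain ⟨t, htZ, htj⟩ := HSVSt.mk' Z hZfin e
  refine ⟨t, htZ ▸ hYZ, fun a ha => ?_⟩
  rw [htj a (htZ ▸ hYZ (Set.subset_union_left ha))]
  exact he a ha

end Ext


/-- For a complete separable metric space, the Hrushovski–Solecki–Vershik property
implies ultrahomogeneity: every distance-preserving bijection between two finite subsets
extends to a distance-preserving bijection of the whole space onto itself. -/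
theorem hsv_implies_ultrahomogeneous {X : Type*} [MetricSpace X] [CompleteSpace X]
    [TopologicalSpace.SeparableSpace X] (h : HSVProperty X)
    (A B : Set X) (hA : A.Finite) (hB : B.Finite)
    (p : X → X) (hp : Set.BijOn p A B)
    (hd : ∀ a ∈ A, ∀ b ∈ A, dist (p a) (p b) = dist a b) :
    ∃ j : X ≃ᵢ X, ∀ a ∈ A, j a = p a := by
  classical
  rcases isEmpty_or_nonempty X with hX | hX
  · exact ⟨IsometryEquiv.refl X, fun a _ => (IsEmpty.false a).elim⟩
  -- base state
  obtain ⟨Z0, hZ0fin, hYZ0, key⟩ := h (A ∪ B) (hA.union hB)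
  obtain ⟨e0, he0⟩ := key A B Set.subset_union_left Set.subset_union_right p hp hd
  obtain ⟨s0, hs0Z, hs0j⟩ := HSVSt.mk' Z0 hZ0fin e0
  have hAZ0' : ∀ a ∈ A, a ∈ Z0 := fun a ha => hYZ0 (Set.subset_union_left ha)
  have hAZ0 : A ⊆ s0.Z := by rw [hs0Z]; exact fun a ha => hAZ0' a ha
  have hs0p : ∀ a ∈ A, s0.j a = p a := by
    intro a ha
    rw [hs0j a (hAZ0' a ha)]
    exact he0 a ha
  -- the chain
  choose step hZstep hjstep using hsv_step h
  set u : ℕ → X := TopologicalSpace.denseSeq X with hu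
  set seq : ℕ → HSVSt X := fun n => Nat.rec s0 (fun n s => step s (u n)) n with hseq
  have hseqsucc : ∀ n, seq (n + 1) = step (seq n) (u n) := fun n => rfl
  have hmono : ∀ n, (seq n).Z ⊆ (seq (n + 1)).Z := fun n =>
    fun a ha => hZstep (seq n) (u n) (Set.subset_union_left ha)
  have hmonoLe : ∀ m n, m ≤ n → (seq m).Z ⊆ (seq n).Z := by
    intro m n hmn
    induction n, hmn using Nat.le_induction with
    | base => exact subset_rfl
    | succ n hmn ih => exact ih.trans (hmono n)
  have hagree : ∀ n, ∀ a ∈ (seq n).Z, (seq (n + 1)).j a = (seq n).j a := fun n =>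
    hjstep (seq n) (u n)
  have hagreeLe : ∀ m n, m ≤ n → ∀ a ∈ (seq m).Z, (seq n).j a = (seq m).j a := by
    intro m n hmn
    induction n, hmn using Nat.le_induction with
    | base => intro a _; rfl
    | succ n hmn ih =>
      intro a ha
      rw [hagree n a (hmonoLe m n hmn ha)]
      exact ih a ha
  set W : Set X := ⋃ n, (seq n).Z with hW
  have hZW : ∀ n, (seq n).Z ⊆ W := fun n => Set.subset_iUnion (fun n => (seq n).Z) n
  set f : X → X := fun x => if hx : ∃ n, x ∈ (seq n).Z then (seq (Nat.find hx)).j x else x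
    with hf
  have hfeq : ∀ n, ∀ x ∈ (seq n).Z, f x = (seq n).j x := by
    intro n x hx
    have hex : ∃ m, x ∈ (seq m).Z := ⟨n, hx⟩
    have hle : Nat.find hex ≤ n := Nat.find_min' hex hx
    simp only [hf, dif_pos hex]
    exact (hagreeLe (Nat.find hex) n hle x (Nat.find_spec hex)).symm
  -- f is an isometric bijection of W
  have hfiso : ∀ a ∈ W, ∀ b ∈ W, dist (f a) (f b) = dist a b := by
    intro a ha b hb
    obtain ⟨_, ⟨m, rfl⟩, ham⟩ := ha
    obtain ⟨_, ⟨n, rfl⟩, hbn⟩ := hb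
    have haN : a ∈ (seq (max m n)).Z := hmonoLe m _ (le_max_left m n) ham
    have hbN : b ∈ (seq (max m n)).Z := hmonoLe n _ (le_max_right m n) hbn
    rw [hfeq _ a haN, hfeq _ b hbN]
    exact (seq (max m n)).iso a haN b hbN
  have hfbij : Set.BijOn f W W := by
    refine ⟨?_, ?_, ?_⟩
    · rintro a ⟨_, ⟨n, rfl⟩, han⟩
      rw [hfeq n a han]
      exact hZW n ((seq n).bij.mapsTo han)
    · intro a ha b hb hab
      have : dist a b = 0 := by rw [← hfiso a ha b hb, hab, dist_self]
      exact dist_eq_zero.mp this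
    · rintro b ⟨_, ⟨n, rfl⟩, hbn⟩
      obtain ⟨a, han, hab⟩ := (seq n).bij.surjOn hbn
      exact ⟨a, hZW n han, by rw [hfeq n a han]; exact hab⟩
  -- W is dense
  have hWdense : Dense W := by
    have hrange : Set.range u ⊆ W := by
      rintro _ ⟨n, rfl⟩
      exact hZW (n + 1) (hZstep (seq n) (u n) (Set.mem_union_right _ rfl))
    exact Dense.mono hrange (TopologicalSpace.denseRange_denseSeq X)
  obtain ⟨e, he⟩ := extend_isometry W hWdense f hfbij hfiso
  refine ⟨e, fun a ha => ?_⟩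
  have haW : a ∈ W := hZW 0 (hAZ0 ha)
  rw [he a haW, hfeq 0 a (hAZ0 ha)]
  exact hs0p a ha
end

section
/- A complete separable metric space X has the Hrushovski–Solecki–Vershik property if and only if for every finite subset Y of X there exists a finite subset Z with Y ⊆ Z ⊆ X such that every partial isometry of Y (distance-preserving bijection between two subsets of Y) extends to a distance-preserving bijection j of X onto itself with j(Z) = Z. -/
open Set Filter Topology

/-- Extend a coherent chain of isometries of an increasing chain of subsets with dense
union to a continuous distance-preserving map of the whole complete space. -/
lemma hsv_extend_chain {X : Type*} [MetricSpace X] [CompleteSpace X]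
    (C : ℕ → Set X) (hmono : ∀ n, C n ⊆ C (n + 1))
    (hdense : Dense (⋃ n, C n))
    (K : ∀ n, (C n) ≃ᵢ (C n))
    (hcoh : ∀ n (a : X) (ha : a ∈ C n), (K (n + 1) ⟨a, hmono n ha⟩ : X) = K n ⟨a, ha⟩) :
    ∃ φ : X → X, Continuous φ ∧ (∀ x y, dist (φ x) (φ y) = dist x y) ∧
      ∀ n (a : X) (ha : a ∈ C n), φ a = K n ⟨a, ha⟩ := by
  have hle : ∀ {m n : ℕ}, m ≤ n → C m ⊆ C n := fun {m n} h =>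
    monotone_nat_of_le_succ (f := C) hmono h
  have hagree : ∀ (m n : ℕ) (h : m ≤ n) (a : X) (ha : a ∈ C m),
      (K n ⟨a, hle h ha⟩ : X) = K m ⟨a, ha⟩ := by
    intro m n h
    induction n, h using Nat.le_induction with
    | base => intro a ha; rfl
    | succ n hmn ih =>
      intro a ha
      have := hcoh n a (hle hmn ha)
      rw [show (⟨a, hle (Nat.le_succ_of_le hmn) ha⟩ : C (n+1)) = ⟨a, hmono n (hle hmn ha)⟩ from rfl]
      rw [this, ih a ha]
  set D : Set X := ⋃ n, C n with hD
  have memD : ∀ {n : ℕ} {a : X}, a ∈ C n → a ∈ D := fun {n a} ha => mem_iUnion.2 ⟨n, ha⟩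
  have exn : ∀ x : D, ∃ n, (x : X) ∈ C n := fun x => mem_iUnion.1 x.2
  set F : D → X := fun x => (K (exn x).choose ⟨x, (exn x).choose_spec⟩ : X) with hF
  have hFeq : ∀ (x : D) (n : ℕ) (hx : (x : X) ∈ C n), F x = K n ⟨x, hx⟩ := by
    intro x n hx
    set m := (exn x).choose with hm
    have hxm : (x : X) ∈ C m := (exn x).choose_spec
    have h1 : (K (max m n) ⟨x, hle (le_max_left m n) hxm⟩ : X) = K m ⟨x, hxm⟩ :=
      hagree m (max m n) (le_max_left m n) x hxm
    have h2 : (K (max m n) ⟨x, hle (le_max_right m n) hx⟩ : X) = K n ⟨x, hx⟩ :=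
      hagree n (max m n) (le_max_right m n) x hx
    have : (⟨x, hle (le_max_left m n) hxm⟩ : C (max m n)) = ⟨x, hle (le_max_right m n) hx⟩ := rfl
    rw [hF]
    rw [← h2, ← this, h1]
  have hFdist : ∀ x y : D, dist (F x) (F y) = dist (x : X) (y : X) := by
    intro x y
    obtain ⟨m, hm⟩ := exn x
    obtain ⟨n, hn⟩ := exn y
    have hx : (x : X) ∈ C (max m n) := hle (le_max_left m n) hm
    have hy : (y : X) ∈ C (max m n) := hle (le_max_right m n) hn
    rw [hFeq x _ hx, hFeq y _ hy]
    rw [show dist ((K (max m n) ⟨x, hx⟩ : X)) ((K (max m n) ⟨y, hy⟩ : X))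
        = dist (K (max m n) ⟨x, hx⟩) (K (max m n) ⟨y, hy⟩) from rfl]
    rw [(K (max m n)).dist_eq]
    rfl
  have hFiso : Isometry F := Isometry.of_dist_eq fun x y => (hFdist x y).trans rfl
  have h_e : IsUniformInducing ((↑) : D → X) := isometry_subtype_coe.isUniformInducing
  have h_dense : DenseRange ((↑) : D → X) := hdense.denseRange_val
  have h_f : UniformContinuous F := hFiso.uniformContinuous
  set ψ : X → X := (h_e.isDenseInducing h_dense).extend F with hψ
  have hψc : Continuous ψ := (uniformContinuous_uniformly_extend h_e h_dense h_f).continuous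
  have hψe : ∀ x : D, ψ x = F x := fun x => uniformly_extend_of_ind h_e h_dense h_f x
  have hψdist : ∀ x y : X, dist (ψ x) (ψ y) = dist x y := by
    have hc : IsClosed {p : X × X | dist (ψ p.1) (ψ p.2) = dist p.1 p.2} :=
      isClosed_eq (by fun_prop) continuous_dist
    have hsub : D ×ˢ D ⊆ {p : X × X | dist (ψ p.1) (ψ p.2) = dist p.1 p.2} := by
      rintro ⟨x, y⟩ ⟨hx, hy⟩
      simp only [mem_setOf_eq]
      rw [hψe ⟨x, hx⟩, hψe ⟨y, hy⟩, hFdist]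
    intro x y
    have hdd : Dense (D ×ˢ D) := hdense.prod hdense
    exact (hc.closure_subset_iff.2 hsub) (hdd (x, y))
  refine ⟨ψ, hψc, hψdist, fun n a ha => ?_⟩
  exact (hψe ⟨a, memD ha⟩).trans (hFeq ⟨a, memD ha⟩ n ha)

/-- A complete separable metric space `X` has the Hrushovski–Solecki–Vershik property
if and only if for every finite subset `Y` there exists a finite subset `Z` with
`Y ⊆ Z ⊆ X` such that every partial isometry of `Y` extends to a distance-preserving
bijection `j` of `X` onto itself with `j(Z) = Z`. -/
theorem hsv_iff_global {X : Type*} [MetricSpace X] [CompleteSpace X]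
    [TopologicalSpace.SeparableSpace X] :
    HSVProperty X ↔
      ∀ Y : Set X, Y.Finite →
        ∃ (Z : Set X) (_ : Z.Finite), Y ⊆ Z ∧
          ∀ (A B : Set X), A ⊆ Y → B ⊆ Y →
            ∀ p : X → X, Set.BijOn p A B →
              (∀ a ∈ A, ∀ b ∈ A, dist (p a) (p b) = dist a b) →
              ∃ j : X ≃ᵢ X, (j '' Z = Z) ∧ ∀ a ∈ A, j a = p a := by
  constructor
  · -- forward direction
    intro hH Y hY
    by_cases hne : Nonempty X
    · obtain ⟨u, hu⟩ := TopologicalSpace.exists_dense_seq X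
      choose Zf Zfin Zsub Zext using hH
      set C : ℕ → {S : Set X // S.Finite} := fun n => Nat.rec ⟨Zf Y hY, Zfin Y hY⟩
        (fun n S => ⟨Zf (S.1 ∪ {u n}) (S.2.union (Set.finite_singleton _)),
          Zfin _ _⟩) n with hC
      have hCmono : ∀ n, (C n).1 ⊆ (C (n + 1)).1 := fun n x hx =>
        Zsub _ _ (Set.mem_union_left _ hx)
      have humem : ∀ n, u n ∈ (C (n + 1)).1 := fun n =>
        Zsub _ _ (Set.mem_union_right _ rfl)
      have hdense : Dense (⋃ n, (C n).1) := by
        apply hu.mono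
        rw [Set.range_subset_iff]
        exact fun n => Set.mem_iUnion.2 ⟨n + 1, humem n⟩
      refine ⟨(C 0).1, (C 0).2, Zsub Y hY, ?_⟩
      intro A B hAY hBY p hbij hdist
      classical
      obtain ⟨j0, hj0⟩ := Zext Y hY A B hAY hBY p hbij hdist
      -- step: extend an isometry of C n to C (n+1)
      have step : ∀ n (j : (C n).1 ≃ᵢ (C n).1),
          ∃ j' : (C (n + 1)).1 ≃ᵢ (C (n + 1)).1,
            ∀ a (ha : a ∈ (C n).1), (j' ⟨a, hCmono n ha⟩ : X) = j ⟨a, ha⟩ := by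
        intro n j
        set q : X → X := fun x => if h : x ∈ (C n).1 then (j ⟨x, h⟩ : X) else x with hq
        have hqmem : ∀ a (ha : a ∈ (C n).1), q a = (j ⟨a, ha⟩ : X) := fun a ha => dif_pos ha
        have hbijq : Set.BijOn q (C n).1 (C n).1 := by
          refine ⟨fun a ha => ?_, fun a ha b hb hab => ?_, fun a ha => ?_⟩
          · rw [hqmem a ha]; exact (j ⟨a, ha⟩).2
          · rw [hqmem a ha, hqmem b hb] at hab
            have := j.injective (Subtype.ext hab)
            exact congrArg Subtype.val this
          · refine ⟨(j.symm ⟨a, ha⟩ : X), (j.symm ⟨a, ha⟩).2, ?_⟩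
            rw [hqmem _ (j.symm ⟨a, ha⟩).2]
            rw [show (⟨(j.symm ⟨a, ha⟩ : X), (j.symm ⟨a, ha⟩).2⟩ : (C n).1)
              = j.symm ⟨a, ha⟩ from rfl]
            rw [j.apply_symm_apply]
        have hdistq : ∀ a ∈ (C n).1, ∀ b ∈ (C n).1, dist (q a) (q b) = dist a b := by
          intro a ha b hb
          rw [hqmem a ha, hqmem b hb]
          rw [show dist ((j ⟨a, ha⟩ : X)) ((j ⟨b, hb⟩ : X))
            = dist (j ⟨a, ha⟩) (j ⟨b, hb⟩) from rfl, j.dist_eq]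
          rfl
        obtain ⟨j', hj'⟩ := Zext ((C n).1 ∪ {u n}) ((C n).2.union (Set.finite_singleton _))
          (C n).1 (C n).1 Set.subset_union_left Set.subset_union_left q hbijq hdistq
        exact ⟨j', fun a ha => (hj' a ha).trans (hqmem a ha)⟩
      choose Jstep hJstep using step
      set J : ∀ n, (C n).1 ≃ᵢ (C n).1 := fun n => Nat.rec j0 Jstep n with hJ
      have hcoh : ∀ n (a : X) (ha : a ∈ (C n).1),
          (J (n + 1) ⟨a, hCmono n ha⟩ : X) = J n ⟨a, ha⟩ := fun n => hJstep n (J n)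
      have hcoh' : ∀ n (a : X) (ha : a ∈ (C n).1),
          ((J (n + 1)).symm ⟨a, hCmono n ha⟩ : X) = (J n).symm ⟨a, ha⟩ := by
        intro n a ha
        set b := (J n).symm ⟨a, ha⟩ with hb
        have hbmem : (b : X) ∈ (C n).1 := b.2
        have key : J (n + 1) ⟨(b : X), hCmono n hbmem⟩ = ⟨a, hCmono n ha⟩ := by
          apply Subtype.ext
          rw [hcoh n b hbmem]
          rw [show (⟨(b : X), hbmem⟩ : (C n).1) = b from rfl, hb, (J n).apply_symm_apply]
        have : (J (n + 1)).symm ⟨a, hCmono n ha⟩ = ⟨(b : X), hCmono n hbmem⟩ := by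
          rw [← key, (J (n + 1)).symm_apply_apply]
        rw [this]
      obtain ⟨φ, hφc, hφd, hφe⟩ := hsv_extend_chain (fun n => (C n).1) hCmono hdense J hcoh
      obtain ⟨φ', hφ'c, hφ'd, hφ'e⟩ := hsv_extend_chain (fun n => (C n).1) hCmono hdense
        (fun n => (J n).symm) hcoh'
      have hid1 : φ ∘ φ' = id := by
        apply Continuous.ext_on hdense (hφc.comp hφ'c) continuous_id
        rintro x hx
        obtain ⟨n, hn⟩ := Set.mem_iUnion.1 hx
        have h1 : φ' x = ((J n).symm ⟨x, hn⟩ : X) := hφ'e n x hn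
        have hmem : ((J n).symm ⟨x, hn⟩ : X) ∈ (C n).1 := ((J n).symm ⟨x, hn⟩).2
        show φ (φ' x) = x
        rw [h1, hφe n _ hmem]
        rw [show (⟨((J n).symm ⟨x, hn⟩ : X), hmem⟩ : (C n).1) = (J n).symm ⟨x, hn⟩ from rfl]
        rw [(J n).apply_symm_apply]
      have hid2 : φ' ∘ φ = id := by
        apply Continuous.ext_on hdense (hφ'c.comp hφc) continuous_id
        rintro x hx
        obtain ⟨n, hn⟩ := Set.mem_iUnion.1 hx
        have h1 : φ x = ((J n) ⟨x, hn⟩ : X) := hφe n x hn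
        have hmem : ((J n) ⟨x, hn⟩ : X) ∈ (C n).1 := ((J n) ⟨x, hn⟩).2
        show φ' (φ x) = x
        rw [h1, hφ'e n _ hmem]
        rw [show (⟨((J n) ⟨x, hn⟩ : X), hmem⟩ : (C n).1) = (J n) ⟨x, hn⟩ from rfl]
        rw [(J n).symm_apply_apply]
      set jg : X ≃ᵢ X := ⟨⟨φ, φ', fun x => congrFun hid2 x, fun x => congrFun hid1 x⟩,
        Isometry.of_dist_eq hφd⟩ with hjg
      refine ⟨jg, ?_, ?_⟩
      · apply Set.Subset.antisymm
        · rintro _ ⟨x, hx, rfl⟩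
          show φ x ∈ (C 0).1
          rw [hφe 0 x hx]
          exact ((J 0) ⟨x, hx⟩).2
        · intro x hx
          set b := (J 0).symm ⟨x, hx⟩ with hb
          refine ⟨(b : X), b.2, ?_⟩
          show φ (b : X) = x
          rw [hφe 0 (b : X) b.2]
          rw [show (⟨(b : X), b.2⟩ : (C 0).1) = b from rfl, hb, (J 0).apply_symm_apply]
      · intro a ha
        show φ a = p a
        rw [hφe 0 a (Zsub Y hY (hAY ha))]
        exact hj0 a ha
    · -- X is empty
      refine ⟨Y, hY, le_refl Y, ?_⟩
      intro A B hAY hBY p hbij hdist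
      refine ⟨IsometryEquiv.refl X, ?_, fun a ha => (hne ⟨a⟩).elim⟩
      rw [show ⇑(IsometryEquiv.refl X) = id from rfl, Set.image_id]
  · -- reverse direction
    intro h Y hY
    obtain ⟨Z, hZfin, hYZ, hext⟩ := h Y hY
    refine ⟨Z, hZfin, hYZ, ?_⟩
    intro A B hAY hBY p hbij hdist
    obtain ⟨j, hjZ, hjp⟩ := hext A B hAY hBY p hbij hdist
    have hmem : ∀ z : Z, j (z : X) ∈ Z := fun z => by
      have := Set.mem_image_of_mem j z.2
      rwa [hjZ] at this
    have hmem' : ∀ z : Z, j.symm (z : X) ∈ Z := by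
      intro z
      have : (z : X) ∈ j '' Z := by rw [hjZ]; exact z.2
      obtain ⟨w, hw, hwz⟩ := this
      rw [← hwz, j.symm_apply_apply]
      exact hw
    refine ⟨⟨⟨fun z => ⟨j z, hmem z⟩, fun z => ⟨j.symm z, hmem' z⟩,
      fun z => Subtype.ext (j.symm_apply_apply z),
      fun z => Subtype.ext (j.apply_symm_apply z)⟩,
      Isometry.of_dist_eq fun a b => ?_⟩, fun a ha => hjp a ha⟩
    rw [Subtype.dist_eq, Subtype.dist_eq]
    exact j.dist_eq _ _
end

section
/- The real line ℝ with its usual metric does not have the Hrushovski–Solecki–Vershik property. In fact, for the finite subset Y = {0, 1, 2, 3} ⊆ ℝ there is no finite subset Z with Y ⊆ Z ⊆ ℝ such that every partial isometry of Y extends to a distance-preserving bijection of Z onto itself: the partial isometry of Y with domain {0, 1, 2} sending t ↦ t + 1 admits no such extension for any finite Z. -/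
theorem Equiv.eq_zero_of_forall_apply_eq_add {α M : Type*} [Fintype α] [Nonempty α]
    [AddCommGroup M] [IsAddTorsionFree M] (e : α ≃ α) (f : α → M) {c : M}
    (h : ∀ x, f (e x) = f x + c) : c = 0 := by
  have hsum : ∑ x, f x + Fintype.card α • c = ∑ x, f x := by
    calc ∑ x, f x + Fintype.card α • c = ∑ x, (f x + c) := by
          rw [Finset.sum_add_distrib, Finset.sum_const, Finset.card_univ]
      _ = ∑ x, f (e x) := by simp only [h]
      _ = ∑ x, f x := e.sum_comp f
  exact (nsmul_eq_zero_iff_right Fintype.card_ne_zero).mp (add_eq_left.mp hsum)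

theorem Real.eq_add_of_dist_eq_of_dist_eq {a b c x y : ℝ} (hab : a ≠ b)
    (ha : dist y (a + c) = dist x a) (hb : dist y (b + c) = dist x b) : y = x + c := by
  rw [Real.dist_eq, Real.dist_eq, ← sq_eq_sq_iff_abs_eq_abs] at ha hb
  have : (b - a) * (y - c - x) = 0 := by linear_combination (ha - hb) / 2
  linarith [(mul_eq_zero.mp this).resolve_left (sub_ne_zero.mpr hab.symm)]

theorem IsometryEquiv.coe_apply_eq_add_of_two_points {Z : Set ℝ} (j : Z ≃ᵢ Z) {a b : Z}
    (hab : a ≠ b) {c : ℝ} (ha : (j a : ℝ) = a + c) (hb : (j b : ℝ) = b + c) (z : Z) :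
    (j z : ℝ) = z + c := by
  apply Real.eq_add_of_dist_eq_of_dist_eq (Subtype.coe_ne_coe.mpr hab)
  · rw [← ha, ← Subtype.dist_eq, ← Subtype.dist_eq, j.dist_eq]
  · rw [← hb, ← Subtype.dist_eq, ← Subtype.dist_eq, j.dist_eq]

theorem Set.Finite.not_exists_isometryEquiv_translating_two_points {Z : Set ℝ} (hZ : Z.Finite)
    {a b : Z} (hab : a ≠ b) {c : ℝ} (hc : c ≠ 0) :
    ¬ ∃ j : Z ≃ᵢ Z, (j a : ℝ) = a + c ∧ (j b : ℝ) = b + c := by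
  rintro ⟨j, ha, hb⟩
  have : Fintype Z := hZ.fintype
  have : Nonempty Z := ⟨a⟩
  exact hc (j.toEquiv.eq_zero_of_forall_apply_eq_add (↑)
    (j.coe_apply_eq_add_of_two_points hab ha hb))

/-- The real line does not have the Hrushovski–Solecki–Vershik property; in fact, for
`Y = {0, 1, 2, 3}` and any finite `Z` with `Y ⊆ Z ⊆ ℝ`, the partial isometry of `Y`
with domain `{0, 1, 2}` given by `t ↦ t + 1` does not extend to a distance-preserving
bijection of `Z` onto itself. -/
theorem real_line_not_hsv :
    ¬ HSVProperty ℝ ∧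
    ∀ Z : Set ℝ, Z.Finite → ({0, 1, 2, 3} : Set ℝ) ⊆ Z →
      ¬ ∃ j : Z ≃ᵢ Z, ∀ t : Z, (t : ℝ) ∈ ({0, 1, 2} : Set ℝ) → ((j t : ℝ) = (t : ℝ) + 1) := by
  have no_extension : ∀ Z : Set ℝ, Z.Finite → ({0, 1, 2, 3} : Set ℝ) ⊆ Z →
      ¬ ∃ j : Z ≃ᵢ Z, ∀ t : Z, (t : ℝ) ∈ ({0, 1, 2} : Set ℝ) → ((j t : ℝ) = (t : ℝ) + 1) := by
    rintro Z hZ hYZ ⟨j, hj⟩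
    have h0 : (0 : ℝ) ∈ Z := hYZ (by simp)
    have h1 : (1 : ℝ) ∈ Z := hYZ (by simp)
    exact hZ.not_exists_isometryEquiv_translating_two_points (a := ⟨0, h0⟩) (b := ⟨1, h1⟩)
      (by simp) one_ne_zero ⟨j, hj _ (by simp), hj _ (by simp)⟩
  refine ⟨fun hsv => ?_, no_extension⟩
  obtain ⟨Z, hZ, hYZ, hext⟩ := hsv {0, 1, 2, 3} (by simp)
  have hbij : Set.BijOn (· + 1) ({0, 1, 2} : Set ℝ) {1, 2, 3} := by
    convert (add_left_injective (1 : ℝ)).injOn.bijOn_image using 1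
    simp only [Set.image_insert_eq, Set.image_singleton]
    norm_num
  obtain ⟨j, hj⟩ := hext {0, 1, 2} {1, 2, 3} (by simp [Set.insert_subset_iff])
    (by simp) (· + 1) hbij (fun a _ b _ => by simp [Real.dist_eq])
  exact no_extension Z hZ hYZ ⟨j, fun t ht => hj t ht⟩
end

section
/- Let E be a real inner product space containing a nonzero vector. Then E, regarded as a metric space with the norm-induced distance, does not have the Hrushovski–Solecki–Vershik property: for any x ≠ 0, taking Y = {0, x, 2x, 3x}, any subset Z ⊆ E containing Y which admits a distance-preserving bijection j : Z → Z with j(0) = x, j(x) = 2x, j(2x) = 3x must contain nx for every natural number n, and hence is infinite. -/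
private lemma hsv_key {E : Type*} [NormedAddCommGroup E] [InnerProductSpace ℝ E]
    (x q : E) (hx : x ≠ 0) (n : ℝ) (hn : 1 ≤ n)
    (hq1 : dist q x = n * ‖x‖) (hq2 : dist q ((2 : ℝ) • x) = (n - 1) * ‖x‖) :
    q = (n + 1) • x := by
  have hxn : (0:ℝ) < ‖x‖ := norm_pos_iff.mpr hx
  have hseg : (2 : ℝ) • x ∈ segment ℝ x q := by
    rw [mem_segment_iff_wbtw, ← dist_add_dist_eq_iff]
    have h1 : dist x ((2:ℝ) • x) = ‖x‖ := by
      rw [dist_eq_norm]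
      have : x - (2:ℝ) • x = -x := by module
      rw [this, norm_neg]
    rw [h1, dist_comm ((2:ℝ) • x) q, hq2, dist_comm x q, hq1]; ring
  obtain ⟨a, b, ha, hb, hab, habq⟩ := hseg
  have hb0 : b ≠ 0 := by
    rintro rfl
    have ha1 : a = 1 := by linarith
    subst ha1
    have h2 : (1:ℝ) • x = 0 := by
      have : (2:ℝ) • x - ((1:ℝ) • x + (0:ℝ) • q) = (1:ℝ) • x := by module
      rw [habq] at this
      rw [← this]; module
    exact hx (by simpa using h2)
  have hbpos : 0 < b := lt_of_le_of_ne hb (Ne.symm hb0)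
  have hq : q = (b⁻¹ * (1 + b)) • x := by
    have hbq : b • q = (1 + b) • x := by
      have ha' : a = 1 - b := by linarith
      subst ha'
      have : b • q = (2:ℝ) • x - (1 - b) • x := by rw [← habq]; module
      rw [this]; module
    have h := congrArg (fun v => b⁻¹ • v) hbq
    simp only [smul_smul, inv_mul_cancel₀ hb0, one_smul] at h
    exact h
  have hdist : dist q x = b⁻¹ * ‖x‖ := by
    rw [hq, dist_eq_norm]
    have hstep : (b⁻¹ * (1 + b)) • x - x = b⁻¹ • x := by
      have hb' : b⁻¹ * (1 + b) = b⁻¹ + 1 := by field_simp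
      rw [hb']; module
    rw [hstep, norm_smul, Real.norm_eq_abs, abs_of_pos (by positivity)]
  have hbn : b⁻¹ = n := mul_right_cancel₀ (ne_of_gt hxn) (hdist.symm.trans hq1)
  rw [hq]
  congr 1
  rw [hbn]
  have hbne : b = n⁻¹ := by rw [← hbn, inv_inv]
  rw [hbne]
  have hnne : n ≠ 0 := by linarith
  field_simp

/-- A real inner product space containing a nonzero vector fails the
Hrushovski–Solecki–Vershik property: for `x ≠ 0` and `Y = {0, x, 2x, 3x}`, any subset
`Z` containing `Y` admitting a self-isometry `j` with `j 0 = x`, `j x = 2x`,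
`j (2x) = 3x` must contain `n • x` for every natural number `n`, hence is infinite. -/
theorem inner_product_space_not_hsv {E : Type*} [NormedAddCommGroup E]
    [InnerProductSpace ℝ E] (x : E) (hx : x ≠ 0) (Z : Set E)
    (h0 : (0 : E) ∈ Z) (h1 : x ∈ Z) (h2 : (2 : ℝ) • x ∈ Z) (h3 : (3 : ℝ) • x ∈ Z)
    (j : Z ≃ᵢ Z)
    (hj0 : (j ⟨0, h0⟩ : E) = x)
    (hj1 : (j ⟨x, h1⟩ : E) = (2 : ℝ) • x)
    (hj2 : (j ⟨(2 : ℝ) • x, h2⟩ : E) = (3 : ℝ) • x) :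
    (∀ n : ℕ, (n : ℝ) • x ∈ Z) ∧ Z.Infinite := by
  have hxn : (0:ℝ) < ‖x‖ := norm_pos_iff.mpr hx
  have key : ∀ n : ℕ, ∃ h : ((n : ℝ)) • x ∈ Z,
      ((j ⟨(n : ℝ) • x, h⟩ : Z) : E) = ((n : ℝ) + 1) • x := by
    intro n
    induction n with
    | zero =>
      refine ⟨by simpa using h0, ?_⟩
      have heq : (⟨((0:ℕ):ℝ) • x, by simpa using h0⟩ : Z) = ⟨0, h0⟩ :=
        Subtype.ext (by simp)
      rw [heq, hj0]
      simp
    | succ n ih =>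
      obtain ⟨hmem, hval⟩ := ih
      have hmemZ : ((n : ℝ) + 1) • x ∈ Z := hval ▸ (j ⟨_, hmem⟩).2
      have hcast : ((n + 1 : ℕ) : ℝ) • x = ((n : ℝ) + 1) • x := by push_cast; ring_nf
      have hmem' : ((n + 1 : ℕ) : ℝ) • x ∈ Z := hcast ▸ hmemZ
      refine ⟨hmem', ?_⟩
      set q : E := (j ⟨((n + 1 : ℕ) : ℝ) • x, hmem'⟩ : E) with hqdef
      have hn1 : (0:ℝ) < (n : ℝ) + 1 := by positivity
      have hdq1 : dist q x = ((n : ℝ) + 1) * ‖x‖ := by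
        have hdd := j.dist_eq ⟨((n + 1 : ℕ) : ℝ) • x, hmem'⟩ ⟨0, h0⟩
        rw [Subtype.dist_eq, Subtype.dist_eq, hj0] at hdd
        rw [hqdef, hdd]
        simp only [dist_eq_norm, sub_zero, hcast, norm_smul, Real.norm_eq_abs]
        rw [abs_of_pos hn1]
      have hdq2 : dist q ((2:ℝ) • x) = (((n : ℝ) + 1) - 1) * ‖x‖ := by
        have hdd := j.dist_eq ⟨((n + 1 : ℕ) : ℝ) • x, hmem'⟩ ⟨x, h1⟩
        rw [Subtype.dist_eq, Subtype.dist_eq, hj1] at hdd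
        rw [hqdef, hdd]
        simp only [dist_eq_norm, hcast]
        have hstep : ((n : ℝ) + 1) • x - x = (n : ℝ) • x := by module
        rw [hstep, norm_smul, Real.norm_eq_abs, abs_of_nonneg (Nat.cast_nonneg n)]
        ring
      have hfin := hsv_key x q hx ((n : ℝ) + 1)
        (by linarith [Nat.cast_nonneg (α := ℝ) n]) hdq1 hdq2
      rw [hfin]
      push_cast
      ring_nf
  refine ⟨fun n => (key n).1, ?_⟩
  apply Set.infinite_of_injective_forall_mem (f := fun n : ℕ => (n : ℝ) • x)
  · intro m n hmn
    simp only at hmn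
    have hsub : ((m : ℝ) - (n : ℝ)) • x = 0 := by rw [sub_smul, hmn, sub_self]
    rcases smul_eq_zero.mp hsub with h | h
    · exact_mod_cast sub_eq_zero.mp h
    · exact absurd h hx
  · intro n; exact (key n).1
end

section
/- Let H be a real inner product space of dimension at least 2, and let S = {x ∈ H : ‖x‖ = 1} be its unit sphere equipped with the metric induced from H (the chordal metric d(x,y) = ‖x − y‖). Then S does not have the Hrushovski–Solecki–Vershik property. -/
open Real RealInnerProductSpace

theorem Real.sin_natCast_ne_zero {n : ℕ} (hn : n ≠ 0) : sin n ≠ 0 := by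
  rw [Ne, sin_eq_zero_iff]
  rintro ⟨k, hk⟩
  have hk₀ : k ≠ 0 := by
    rintro rfl
    have : (n : ℝ) = 0 := by simpa using hk.symm
    exact hn (by exact_mod_cast this)
  exact Nat.not_irrational n (hk ▸ irrational_pi.intCast_mul hk₀)

theorem Isometry.iterate {α : Type*} [PseudoEMetricSpace α] {f : α → α} (hf : Isometry f)
    (n : ℕ) : Isometry f^[n] := by
  induction n with
  | zero => exact isometry_id
  | succ n ih => exact ih.comp hf

theorem Isometry.dist_iterate_add {α : Type*} [PseudoMetricSpace α] {f : α → α}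
    (hf : Isometry f) (x : α) (k m : ℕ) : dist (f^[k] x) (f^[k + m] x) = dist x (f^[m] x) := by
  rw [Function.iterate_add_apply]
  exact (hf.iterate k).dist_eq _ _

theorem HSVProperty.exists_isometryEquiv_of_dist_eq {X : Type*} [MetricSpace X]
    (hX : HSVProperty X) {x₀ x₁ x₂ : X} (hd : dist x₀ x₁ = dist x₁ x₂) :
    ∃ Z : Set X, Z.Finite ∧ ∃ (j : Z ≃ᵢ Z) (z : Z),
      (z : X) = x₀ ∧ (j z : X) = x₁ ∧ (j (j z) : X) = x₂ := by
  classical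
  set p : X → X := fun x => if x = x₀ then x₁ else x₂
  have hp₀ : p x₀ = x₁ := if_pos rfl
  have hp₁ : p x₁ = x₂ := by
    by_cases h : x₁ = x₀
    · subst h
      simpa [p] using hd
    · exact if_neg h
  have hpres : ∀ a ∈ ({x₀, x₁} : Set X), ∀ b ∈ ({x₀, x₁} : Set X), dist (p a) (p b) = dist a b := by
    simp only [Set.mem_insert_iff, Set.mem_singleton_iff]
    rintro a (rfl | rfl) b (rfl | rfl)
    · simp
    · rw [hp₀, hp₁, hd]
    · rw [hp₀, hp₁, dist_comm, ← hd, dist_comm]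
    · simp
  have hinj : Set.InjOn p {x₀, x₁} := fun a ha b hb hab =>
    dist_eq_zero.mp (by rw [← hpres a ha b hb, hab, dist_self])
  have hbij : Set.BijOn p {x₀, x₁} {x₁, x₂} := by
    simpa only [Set.image_pair, hp₀, hp₁] using hinj.bijOn_image
  obtain ⟨Z, hZ, hYZ, hext⟩ := hX {x₀, x₁, x₂} (by simp)
  obtain ⟨j, hj⟩ := hext {x₀, x₁} {x₁, x₂} (by simp [Set.insert_subset_iff]) (by simp) p hbij
    hpres
  have hjz : j ⟨x₀, hYZ (by simp)⟩ = ⟨x₁, hYZ (by simp)⟩ :=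
    Subtype.ext ((hj x₀ (by simp)).trans hp₀)
  refine ⟨Z, hZ, j, ⟨x₀, hYZ (by simp)⟩, rfl, congrArg Subtype.val hjz, ?_⟩
  rw [hjz]
  exact (hj x₁ (by simp)).trans hp₁

theorem exists_orthonormal_of_le_rank {𝕜 E : Type*} [RCLike 𝕜] [NormedAddCommGroup E]
    [InnerProductSpace 𝕜 E] {n : ℕ} (hn : n ≤ Module.rank 𝕜 E) :
    ∃ e : Fin n → E, Orthonormal 𝕜 e :=
  have ⟨_, hv⟩ := Module.le_rank_iff.mp hn
  ⟨_, InnerProductSpace.gramSchmidtNormed_orthonormal hv⟩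

section Sphere

variable {H : Type*} [NormedAddCommGroup H] [InnerProductSpace ℝ H]

theorem dist_sq_eq_two_sub_two_mul_inner {u v : H} (hu : ‖u‖ = 1) (hv : ‖v‖ = 1) :
    dist u v ^ 2 = 2 - 2 * ⟪u, v⟫ := by
  rw [dist_eq_norm, norm_sub_sq_real, hu, hv]
  ring

theorem dist_eq_dist_iff_inner_eq {u v u' v' : H} (hu : ‖u‖ = 1) (hv : ‖v‖ = 1)
    (hu' : ‖u'‖ = 1) (hv' : ‖v'‖ = 1) : dist u v = dist u' v' ↔ ⟪u, v⟫ = ⟪u', v'⟫ := by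
  rw [← sq_eq_sq₀ dist_nonneg dist_nonneg, dist_sq_eq_two_sub_two_mul_inner hu hv,
    dist_sq_eq_two_sub_two_mul_inner hu' hv']
  constructor <;> intro h <;> linarith

/-- Expanding `‖w - (2c • v - u)‖²` leaves only the given inner products, and it vanishes. -/
theorem eq_two_mul_smul_sub_of_inner_eq {u v w : H} {c : ℝ} (hu : ‖u‖ = 1) (hv : ‖v‖ = 1)
    (hw : ‖w‖ = 1) (huv : ⟪u, v⟫ = c) (hvw : ⟪v, w⟫ = c) (huw : ⟪u, w⟫ = 2 * c ^ 2 - 1) :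
    w = (2 * c) • v - u := by
  have hsq : ‖w - ((2 * c) • v - u)‖ ^ 2 = 0 := by
    rw [← real_inner_self_eq_norm_sq]
    simp only [inner_sub_left, inner_sub_right, real_inner_smul_left, real_inner_smul_right,
      real_inner_self_eq_norm_sq, norm_smul, mul_pow, Real.norm_eq_abs, sq_abs, hu, hv, hw,
      real_inner_comm u w, real_inner_comm v w, real_inner_comm u v, huv, hvw, huw]
    ring
  exact sub_eq_zero.mp (norm_eq_zero.mp (pow_eq_zero_iff two_ne_zero |>.mp hsq))

noncomputable def greatCirclePoint (e : Fin 2 → H) (t : ℝ) : H :=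
  cos t • e 0 + sin t • e 1

variable {e : Fin 2 → H}

theorem inner_greatCirclePoint (he : Orthonormal ℝ e) (s t : ℝ) :
    ⟪greatCirclePoint e s, greatCirclePoint e t⟫ = cos (s - t) := by
  have h₀₁ : ⟪e 0, e 1⟫ = 0 := he.2 (by decide)
  simp only [greatCirclePoint, inner_add_left, inner_add_right, real_inner_smul_left,
    real_inner_smul_right, real_inner_self_eq_norm_sq, he.1 0, he.1 1, real_inner_comm (e 0),
    h₀₁, cos_sub]
  ring

theorem norm_greatCirclePoint (he : Orthonormal ℝ e) (t : ℝ) : ‖greatCirclePoint e t‖ = 1 := by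
  rw [norm_eq_sqrt_real_inner, inner_greatCirclePoint he, sub_self, cos_zero, sqrt_one]

theorem inner_greatCirclePoint_right (he : Orthonormal ℝ e) (t : ℝ) :
    ⟪greatCirclePoint e t, e 1⟫ = sin t := by
  have h₀₁ : ⟪e 0, e 1⟫ = 0 := he.2 (by decide)
  simp [greatCirclePoint, inner_add_left, real_inner_smul_left, h₀₁, he.1 1]

theorem greatCirclePoint_add_two_mul (t θ : ℝ) :
    greatCirclePoint e (t + 2 * θ) =
      (2 * cos θ) • greatCirclePoint e (t + θ) - greatCirclePoint e t := by
  have hcos : cos (t + 2 * θ) = 2 * cos θ * cos (t + θ) - cos t := by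
    simp only [cos_add, cos_two_mul, sin_two_mul]
    ring
  have hsin : sin (t + 2 * θ) = 2 * cos θ * sin (t + θ) - sin t := by
    simp only [sin_add, cos_two_mul, sin_two_mul]
    ring
  simp only [greatCirclePoint, hcos, hsin]
  module

theorem eq_greatCirclePoint_of_dist_eq (he : Orthonormal ℝ e) {θ : ℝ} {g : ℕ → H}
    (hg : ∀ k, ‖g k‖ = 1) (hd : ∀ k m, dist (g k) (g (k + m)) = dist (g 0) (g m))
    (h₀ : g 0 = greatCirclePoint e 0) (h₁ : g 1 = greatCirclePoint e θ)
    (h₂ : g 2 = greatCirclePoint e (2 * θ)) (k : ℕ) : g k = greatCirclePoint e (k * θ) := by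
  have hinner : ∀ k m, ⟪g k, g (k + m)⟫ = ⟪g 0, g m⟫ := fun k m =>
    (dist_eq_dist_iff_inner_eq (hg _) (hg _) (hg _) (hg _)).mp (hd k m)
  have hrec : ∀ k, g (k + 2) = (2 * cos θ) • g (k + 1) - g k := fun k =>
    eq_two_mul_smul_sub_of_inner_eq (hg _) (hg _) (hg _)
      (by rw [hinner, h₀, h₁, inner_greatCirclePoint he, zero_sub, cos_neg])
      ((hinner (k + 1) 1).trans (by rw [h₀, h₁, inner_greatCirclePoint he, zero_sub, cos_neg]))
      (by rw [hinner, h₀, h₂, inner_greatCirclePoint he, zero_sub, cos_neg, cos_two_mul])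
  induction k using Nat.twoStepInduction with
  | zero => simpa using h₀
  | one => simpa using h₁
  | more k ih₀ ih₁ =>
    have hcast : ((k + 2 : ℕ) : ℝ) * θ = k * θ + 2 * θ := by push_cast; ring
    rw [hrec, ih₀, ih₁, hcast, greatCirclePoint_add_two_mul, Nat.cast_succ, add_one_mul]

end Sphere

/-- The unit sphere of a real inner product space of dimension at least `2`, with the
chordal metric induced from the ambient space, does not have the
Hrushovski–Solecki–Vershik property. -/
theorem unit_sphere_not_hsv {H : Type*} [NormedAddCommGroup H] [InnerProductSpace ℝ H]
    (hdim : 2 ≤ Module.rank ℝ H) :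
    ¬ HSVProperty (Metric.sphere (0 : H) 1) := by
  intro hsv
  obtain ⟨e, he⟩ := exists_orthonormal_of_le_rank hdim
  let x : ℝ → Metric.sphere (0 : H) 1 := fun t =>
    ⟨greatCirclePoint e t, mem_sphere_zero_iff_norm.mpr (norm_greatCirclePoint he t)⟩
  have hd : dist (x 0) (x 1) = dist (x 1) (x 2) := by
    refine (dist_eq_dist_iff_inner_eq (norm_greatCirclePoint he _) (norm_greatCirclePoint he _)
      (norm_greatCirclePoint he _) (norm_greatCirclePoint he _)).mpr ?_
    simp only [inner_greatCirclePoint he]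
    norm_num
  obtain ⟨Z, hZ, j, z, h₀, h₁, h₂⟩ := hsv.exists_isometryEquiv_of_dist_eq hd
  have horbit (k : ℕ) : ((j^[k] z : Metric.sphere (0 : H) 1) : H) = greatCirclePoint e k := by
    simpa using eq_greatCirclePoint_of_dist_eq he (θ := 1) (fun k => norm_eq_of_mem_sphere _)
      (fun k m => j.isometry.dist_iterate_add z k m) (congrArg Subtype.val h₀)
      (by simpa using congrArg Subtype.val h₁) (by simpa using congrArg Subtype.val h₂) k
  have : Finite Z := hZ.to_subtype
  obtain ⟨n, hn, hper⟩ := Function.mem_periodicPts.mp (j.injective.mem_periodicPts z)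
  have hsin : sin n = 0 := by
    rw [← inner_greatCirclePoint_right he, ← horbit, hper.eq, ← Function.iterate_zero_apply j z,
      horbit, Nat.cast_zero, inner_greatCirclePoint_right he, sin_zero]
  exact sin_natCast_ne_zero hn.ne' hsin
end

section
/- Let F be a finite group acting on a metric space X by isometries (d(g•x, g•y) = d(x,y) for all g ∈ F and x, y ∈ X). Let E be a real normed space, let ρ₁, ρ₂ : ℝ → ℝ be nonnegative functions, and let φ : X → E satisfy ρ₁(d(x,y)) ≤ ‖φ(x) − φ(y)‖ ≤ ρ₂(d(x,y)) for all x, y ∈ X. Define ψ : X → ℓ²(F; E) (the space of functions F → E with the norm ‖f‖ = (Σ_{g∈F} ‖f(g)‖²)^{1/2}) by ψ(x)(g) = |F|^{−1/2} φ(g⁻¹ • x). Then ρ₁(d(x,y)) ≤ ‖ψ(x) − ψ(y)‖ ≤ ρ₂(d(x,y)) for all x, y ∈ X. -/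
/-- Averaging a (uniform/coarse-type) embedding over a finite group of isometries.
If a finite group `F` acts by isometries on a metric space `X` and `φ : X → E` satisfies
`ρ₁(d(x,y)) ≤ ‖φ x − φ y‖ ≤ ρ₂(d(x,y))`, then the map
`ψ : X → ℓ²(F; E)`, `ψ x g = |F|^{-1/2} • φ (g⁻¹ • x)`, satisfies the same inequalities. -/
theorem averaged_map_same_bounds {F X E : Type*} [Group F] [Fintype F] [MetricSpace X]
    [MulAction F X] [NormedAddCommGroup E] [NormedSpace ℝ E]
    (hiso : ∀ (g : F) (x y : X), dist (g • x) (g • y) = dist x y)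
    (ρ₁ ρ₂ : ℝ → ℝ) (hρ₁ : ∀ t, 0 ≤ ρ₁ t) (hρ₂ : ∀ t, 0 ≤ ρ₂ t)
    (φ : X → E)
    (hφ : ∀ x y : X, ρ₁ (dist x y) ≤ ‖φ x - φ y‖ ∧ ‖φ x - φ y‖ ≤ ρ₂ (dist x y))
    (ψ : X → PiLp 2 (fun _ : F => E))
    (hψ : ∀ (x : X) (g : F), ψ x g = (Real.sqrt (Fintype.card F))⁻¹ • φ (g⁻¹ • x)) :
    ∀ x y : X, ρ₁ (dist x y) ≤ ‖ψ x - ψ y‖ ∧ ‖ψ x - ψ y‖ ≤ ρ₂ (dist x y) := by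
  intro x y
  set n : ℕ := Fintype.card F with hn
  have hnpos : (0:ℝ) < n := by
    exact_mod_cast Fintype.card_pos
  set c : ℝ := (Real.sqrt n)⁻¹ with hc
  have hc0 : 0 ≤ c := by positivity
  have hc2 : c ^ 2 * n = 1 := by
    rw [hc, inv_pow, Real.sq_sqrt hnpos.le]
    field_simp
  have hterm : ∀ g : F, ‖ψ x g - ψ y g‖ = c * ‖φ (g⁻¹ • x) - φ (g⁻¹ • y)‖ := by
    intro g
    rw [hψ, hψ, ← smul_sub, norm_smul, Real.norm_eq_abs, abs_of_nonneg hc0]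
  have hdist : ∀ g : F, dist (g⁻¹ • x) (g⁻¹ • y) = dist x y := fun g => hiso g⁻¹ x y
  have hnorm : ‖ψ x - ψ y‖ = Real.sqrt (∑ g : F, ‖ψ x g - ψ y g‖ ^ 2) := by
    rw [PiLp.norm_eq_of_L2]
    rfl
  have hS1 : (ρ₁ (dist x y)) ^ 2 ≤ ∑ g : F, ‖ψ x g - ψ y g‖ ^ 2 := by
    calc (ρ₁ (dist x y)) ^ 2 = c ^ 2 * n * (ρ₁ (dist x y)) ^ 2 := by rw [hc2]; ring
    _ = ∑ _g : F, c ^ 2 * (ρ₁ (dist x y)) ^ 2 := by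
        rw [Finset.sum_const, Finset.card_univ, ← hn, nsmul_eq_mul]; ring
    _ ≤ ∑ g : F, ‖ψ x g - ψ y g‖ ^ 2 := by
        apply Finset.sum_le_sum
        intro g _
        rw [hterm g, mul_pow]
        apply mul_le_mul_of_nonneg_left _ (by positivity)
        apply pow_le_pow_left₀ (hρ₁ _)
        rw [← hdist g]
        exact (hφ _ _).1
  have hS2 : ∑ g : F, ‖ψ x g - ψ y g‖ ^ 2 ≤ (ρ₂ (dist x y)) ^ 2 := by
    calc ∑ g : F, ‖ψ x g - ψ y g‖ ^ 2 ≤ ∑ _g : F, c ^ 2 * (ρ₂ (dist x y)) ^ 2 := by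
          apply Finset.sum_le_sum
          intro g _
          rw [hterm g, mul_pow]
          apply mul_le_mul_of_nonneg_left _ (by positivity)
          apply pow_le_pow_left₀ (norm_nonneg _)
          rw [← hdist g]
          exact (hφ _ _).2
    _ = (ρ₂ (dist x y)) ^ 2 := by
        rw [Finset.sum_const, Finset.card_univ, ← hn, nsmul_eq_mul, ← mul_assoc,
          mul_comm (n : ℝ), hc2, one_mul]
  constructor
  · rw [hnorm]
    calc ρ₁ (dist x y) = Real.sqrt ((ρ₁ (dist x y)) ^ 2) := (Real.sqrt_sq (hρ₁ _)).symm
    _ ≤ _ := Real.sqrt_le_sqrt hS1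
  · rw [hnorm]
    calc Real.sqrt (∑ g : F, ‖ψ x g - ψ y g‖ ^ 2) ≤ Real.sqrt ((ρ₂ (dist x y)) ^ 2) :=
        Real.sqrt_le_sqrt hS2
    _ = ρ₂ (dist x y) := Real.sqrt_sq (hρ₂ _)
end

section
/- Let E be a real normed space, let ε > 0, M > 0, and n ∈ ℕ. Suppose (K_i)_{1 ≤ i ≤ 2^{n+1}−1} is a family of nonempty convex subsets of the closed ball of radius M centered at 0 in E such that for each 1 ≤ i ≤ 2^n − 1 one has K_{2i} ⊆ K_i and K_{2i+1} ⊆ K_i, and ‖x − y‖ ≥ ε for all x ∈ K_{2i} and y ∈ K_{2i+1}. Then E contains an (n,ε)-tree inside the closed ball of radius M: there exists t : {1, …, 2^{n+1}−1} → E with t_i ∈ K_i for all i, and for each 1 ≤ i ≤ 2^n − 1, t_i = (t_{2i} + t_{2i+1})/2 and ‖t_{2i} − t_{2i+1}‖ ≥ ε. -/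
noncomputable def buildTreeAux {E : Type*} [NormedAddCommGroup E] [NormedSpace ℝ E]
    (pick : ℕ → E) (N : ℕ) : ℕ → E := fun i =>
  if 1 ≤ i ∧ i ≤ N then
    (2 : ℝ)⁻¹ • (buildTreeAux pick N (2 * i) + buildTreeAux pick N (2 * i + 1))
  else pick i
termination_by i => 2 * N + 2 - i
decreasing_by all_goals omega

theorem buildTreeAux_eq {E : Type*} [NormedAddCommGroup E] [NormedSpace ℝ E]
    (pick : ℕ → E) (N : ℕ) (i : ℕ) :
    buildTreeAux pick N i =
      if 1 ≤ i ∧ i ≤ N then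
        (2 : ℝ)⁻¹ • (buildTreeAux pick N (2 * i) + buildTreeAux pick N (2 * i + 1))
      else pick i := by
  rw [buildTreeAux]

/-- From a binary-tree-indexed system of convex subsets of the `M`-ball of a normed space,
whose children are `ε`-separated, one can extract an `(n, ε)`-tree inside the `M`-ball:
points `t i ∈ K i` with `t i = (t (2i) + t (2i+1)) / 2` and `‖t (2i) − t (2i+1)‖ ≥ ε`
for every internal node `i`. -/
theorem tree_of_separated_convex_sets {E : Type*} [NormedAddCommGroup E] [NormedSpace ℝ E]
    (ε M : ℝ) (hε : 0 < ε) (hM : 0 < M) (n : ℕ) (K : ℕ → Set E)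
    (hne : ∀ i, 1 ≤ i → i ≤ 2 ^ (n + 1) - 1 → (K i).Nonempty)
    (hconv : ∀ i, 1 ≤ i → i ≤ 2 ^ (n + 1) - 1 → Convex ℝ (K i))
    (hball : ∀ i, 1 ≤ i → i ≤ 2 ^ (n + 1) - 1 → K i ⊆ Metric.closedBall (0 : E) M)
    (hsub : ∀ i, 1 ≤ i → i ≤ 2 ^ n - 1 → K (2 * i) ⊆ K i ∧ K (2 * i + 1) ⊆ K i)
    (hsep : ∀ i, 1 ≤ i → i ≤ 2 ^ n - 1 →
      ∀ x ∈ K (2 * i), ∀ y ∈ K (2 * i + 1), ε ≤ ‖x - y‖) :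
    ∃ t : ℕ → E,
      (∀ i, 1 ≤ i → i ≤ 2 ^ (n + 1) - 1 → t i ∈ K i) ∧
      (∀ i, 1 ≤ i → i ≤ 2 ^ n - 1 →
        t i = (2 : ℝ)⁻¹ • (t (2 * i) + t (2 * i + 1)) ∧
        ε ≤ ‖t (2 * i) - t (2 * i + 1)‖) := by
  have hpow : (2 : ℕ) ^ (n + 1) = 2 * 2 ^ n := by ring
  have hpos : 1 ≤ (2 : ℕ) ^ n := Nat.one_le_two_pow
  have hchoice : ∀ i, ∃ x : E, 1 ≤ i → i ≤ 2 ^ (n + 1) - 1 → x ∈ K i := by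
    intro i
    by_cases h : 1 ≤ i ∧ i ≤ 2 ^ (n + 1) - 1
    · obtain ⟨x, hx⟩ := hne i h.1 h.2
      exact ⟨x, fun _ _ => hx⟩
    · exact ⟨0, fun h1 h2 => absurd ⟨h1, h2⟩ h⟩
  choose pick hpick using hchoice
  set t : ℕ → E := buildTreeAux pick (2 ^ n - 1) with ht
  have hmem : ∀ m i, 2 ^ (n + 1) - 1 - i < m → 1 ≤ i → i ≤ 2 ^ (n + 1) - 1 → t i ∈ K i := by
    intro m
    induction m with
    | zero => intro i h; omega
    | succ m ih =>
      intro i hm h1 h2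
      rw [ht, buildTreeAux_eq]
      by_cases hint : 1 ≤ i ∧ i ≤ 2 ^ n - 1
      · rw [if_pos hint]
        have hc1 : 1 ≤ 2 * i := by omega
        have hc2 : 2 * i ≤ 2 ^ (n + 1) - 1 := by omega
        have hc3 : 2 * i + 1 ≤ 2 ^ (n + 1) - 1 := by omega
        have ha : t (2 * i) ∈ K (2 * i) := ih (2 * i) (by omega) hc1 hc2
        have hb : t (2 * i + 1) ∈ K (2 * i + 1) := ih (2 * i + 1) (by omega) (by omega) hc3
        have ha' : t (2 * i) ∈ K i := (hsub i hint.1 hint.2).1 ha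
        have hb' : t (2 * i + 1) ∈ K i := (hsub i hint.1 hint.2).2 hb
        have := hconv i h1 h2 ha' hb' (by norm_num : (0:ℝ) ≤ 2⁻¹)
          (by norm_num : (0:ℝ) ≤ 2⁻¹) (by norm_num)
        simpa [smul_add] using this
      · rw [if_neg hint]
        exact hpick i h1 h2
  have hmem' : ∀ i, 1 ≤ i → i ≤ 2 ^ (n + 1) - 1 → t i ∈ K i :=
    fun i h1 h2 => hmem (2 ^ (n + 1)) i (by omega) h1 h2
  refine ⟨t, hmem', fun i h1 h2 => ?_⟩
  have ha : t (2 * i) ∈ K (2 * i) := hmem' (2 * i) (by omega) (by omega)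
  have hb : t (2 * i + 1) ∈ K (2 * i + 1) := hmem' (2 * i + 1) (by omega) (by omega)
  constructor
  · conv_lhs => rw [ht, buildTreeAux_eq]
    rw [if_pos ⟨h1, h2⟩]
  · exact hsep i h1 h2 _ ha _ hb
end

section
/- Let E be a real normed space and let ε > 0, M > 0. Suppose that for every n ∈ ℕ there exists a family (K_i)_{1 ≤ i ≤ 2^{n+1}−1} of nonempty convex subsets of the closed ball of radius M centered at 0 in E such that for each 1 ≤ i ≤ 2^n − 1 one has K_{2i} ⊆ K_i and K_{2i+1} ⊆ K_i, and ‖x − y‖ ≥ ε for all x ∈ K_{2i} and y ∈ K_{2i+1}. Then E is not uniformly convex. -/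
/-- If for some `ε > 0` and `M > 0` and for every `n` a normed space `E` contains a
binary-tree-indexed system of depth `n` of nonempty convex subsets of the closed `M`-ball,
in which both children of each node are contained in the node and are `ε`-separated from
each other, then `E` is not uniformly convex. -/
theorem not_uniformConvex_of_separated_convex_trees {E : Type*} [NormedAddCommGroup E]
    [NormedSpace ℝ E] (ε M : ℝ) (hε : 0 < ε) (hM : 0 < M)
    (h : ∀ n : ℕ, ∃ K : ℕ → Set E,
      (∀ i, 1 ≤ i → i ≤ 2 ^ (n + 1) - 1 → (K i).Nonempty) ∧
      (∀ i, 1 ≤ i → i ≤ 2 ^ (n + 1) - 1 → Convex ℝ (K i)) ∧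
      (∀ i, 1 ≤ i → i ≤ 2 ^ (n + 1) - 1 → K i ⊆ Metric.closedBall (0 : E) M) ∧
      (∀ i, 1 ≤ i → i ≤ 2 ^ n - 1 → K (2 * i) ⊆ K i ∧ K (2 * i + 1) ⊆ K i) ∧
      (∀ i, 1 ≤ i → i ≤ 2 ^ n - 1 →
        ∀ x ∈ K (2 * i), ∀ y ∈ K (2 * i + 1), ε ≤ ‖x - y‖)) :
    ¬ UniformConvexSpace E := by
  intro hUC
  obtain ⟨δ₀, hδ₀, hP⟩ :=
    exists_forall_closed_ball_dist_add_le_two_sub E (div_pos hε hM)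
  set δ : ℝ := min δ₀ 1 with hδdef
  have hδpos : 0 < δ := lt_min hδ₀ one_pos
  have hδle : δ ≤ 1 := min_le_right _ _
  set c : ℝ := 1 - δ / 2 with hcdef
  have hc0 : 0 ≤ c := by simp only [hcdef]; linarith
  have hc1 : c < 1 := by simp only [hcdef]; linarith
  -- key scaled midpoint estimate
  have key : ∀ r : ℝ, 0 < r → r ≤ M → ∀ x y : E, ‖x‖ ≤ r → ‖y‖ ≤ r →
      ε ≤ ‖x - y‖ → ‖x + y‖ ≤ (2 - δ) * r := by
    intro r hr hrM x y hx hy hxy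
    have hx' : ‖r⁻¹ • x‖ ≤ 1 := by
      rw [norm_smul, norm_inv, Real.norm_of_nonneg hr.le]
      rw [inv_mul_le_iff₀ hr, mul_one]; exact hx
    have hy' : ‖r⁻¹ • y‖ ≤ 1 := by
      rw [norm_smul, norm_inv, Real.norm_of_nonneg hr.le]
      rw [inv_mul_le_iff₀ hr, mul_one]; exact hy
    have hsep : ε / M ≤ ‖r⁻¹ • x - r⁻¹ • y‖ := by
      rw [← smul_sub, norm_smul, norm_inv, Real.norm_of_nonneg hr.le]
      calc ε / M ≤ ε / r := by
            apply div_le_div_of_nonneg_left hε.le hr hrM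
        _ ≤ ‖x - y‖ / r := by gcongr
        _ = r⁻¹ * ‖x - y‖ := by rw [div_eq_inv_mul]
    have := hP hx' hy' hsep
    have h2 : ‖r⁻¹ • x + r⁻¹ • y‖ ≤ 2 - δ := by
      calc ‖r⁻¹ • x + r⁻¹ • y‖ ≤ 2 - δ₀ := this
        _ ≤ 2 - δ := by simp only [hδdef]; linarith [min_le_left δ₀ 1]
    have h3 : ‖r⁻¹ • x + r⁻¹ • y‖ = r⁻¹ * ‖x + y‖ := by
      rw [← smul_add, norm_smul, norm_inv, Real.norm_of_nonneg hr.le]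
    rw [h3, inv_mul_le_iff₀ hr] at h2
    linarith [h2]
  -- choose depth
  obtain ⟨d, hd⟩ := exists_pow_lt_of_lt_one (div_pos hε (by linarith : (0:ℝ) < 2 * M)) hc1
  set n : ℕ := d + 1 with hndef
  obtain ⟨K, hne, hconv, hball, hsub, hsepK⟩ := h n
  -- main claim
  have claim : ∀ m : ℕ, ∀ i : ℕ, 1 ≤ i → (i + 1) * 2 ^ m ≤ 2 ^ (n + 1) →
      ∃ x ∈ K i, ‖x‖ ≤ M * c ^ m := by
    intro m
    induction m with
    | zero =>
      intro i hi1 hi2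
      have hi3 : i ≤ 2 ^ (n + 1) - 1 := by
        have : 1 ≤ 2 ^ (n + 1) := Nat.one_le_two_pow
        omega
      obtain ⟨x, hx⟩ := hne i hi1 hi3
      refine ⟨x, hx, ?_⟩
      have := hball i hi1 hi3 hx
      simpa [Metric.mem_closedBall, dist_eq_norm] using this
    | succ m ih =>
      intro i hi1 hi2
      have h2m : (1:ℕ) ≤ 2 ^ m := Nat.one_le_two_pow
      have hc1' : (2*i + 1 + 1) * 2 ^ m ≤ 2 ^ (n + 1) := by
        calc (2*i + 1 + 1) * 2 ^ m = (i + 1) * 2 ^ (m + 1) := by ring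
          _ ≤ 2 ^ (n + 1) := hi2
      have hc0' : (2*i + 1) * 2 ^ m ≤ 2 ^ (n + 1) := by
        refine le_trans ?_ hc1'
        exact Nat.mul_le_mul_right _ (by omega)
      obtain ⟨x, hxK, hxn⟩ := ih (2 * i) (by omega) hc0'
      obtain ⟨y, hyK, hyn⟩ := ih (2 * i + 1) (by omega) hc1'
      have hin : i ≤ 2 ^ n - 1 := by
        have h2m1 : (2:ℕ) ≤ 2 ^ (m + 1) := by
          calc (2:ℕ) = 2 ^ 1 := rfl
            _ ≤ 2 ^ (m + 1) := Nat.pow_le_pow_right (by norm_num) (by omega)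
        have : (i + 1) * 2 ≤ 2 ^ (n + 1) :=
          le_trans (Nat.mul_le_mul_left _ h2m1) hi2
        have h2n : 2 ^ (n + 1) = 2 ^ n * 2 := by ring
        have h1n : (1:ℕ) ≤ 2 ^ n := Nat.one_le_two_pow
        omega
      have hin' : i ≤ 2 ^ (n + 1) - 1 := by
        have h1 : (2:ℕ) ^ n ≤ 2 ^ (n + 1) := Nat.pow_le_pow_right (by norm_num) (by omega)
        omega
      have hsepxy : ε ≤ ‖x - y‖ := hsepK i hi1 hin x hxK y hyK
      set r : ℝ := M * c ^ m with hrdef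
      have hcm0 : 0 < c := by
        simp only [hcdef]; linarith
      have hr0 : 0 < r := mul_pos hM (pow_pos hcm0 m)
      have hrM : r ≤ M := by
        calc r = M * c ^ m := rfl
          _ ≤ M * 1 := by
              apply mul_le_mul_of_nonneg_left _ hM.le
              exact pow_le_one₀ hc0 hc1.le
          _ = M := mul_one M
      have hmid : ‖x + y‖ ≤ (2 - δ) * r := key r hr0 hrM x y hxn hyn hsepxy
      refine ⟨(1/2 : ℝ) • x + (1/2 : ℝ) • y, ?_, ?_⟩
      · have hKi := hconv i hi1 hin'
        have hsubs := hsub i hi1 hin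
        exact hKi (hsubs.1 hxK) (hsubs.2 hyK) (by norm_num) (by norm_num) (by norm_num)
      · have : (1/2 : ℝ) • x + (1/2 : ℝ) • y = (1/2 : ℝ) • (x + y) := by
          rw [smul_add]
        rw [this, norm_smul]
        have : ‖(1/2 : ℝ)‖ = 1/2 := by norm_num
        rw [this]
        calc (1/2 : ℝ) * ‖x + y‖ ≤ (1/2) * ((2 - δ) * r) := by linarith
          _ = r * (1 - δ/2) := by ring
          _ = M * c ^ (m + 1) := by rw [hrdef, hcdef]; ring
  -- contradiction at the two children of the root
  have hcond : ∀ i, i = 2 ∨ i = 3 → (i + 1) * 2 ^ d ≤ 2 ^ (n + 1) := by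
    intro i hi
    have h1 : (i + 1) * 2 ^ d ≤ 4 * 2 ^ d := by
      apply Nat.mul_le_mul_right; omega
    have h2 : 4 * 2 ^ d = 2 ^ (n + 1) := by
      rw [hndef]; ring
    omega
  obtain ⟨x, hxK, hxn⟩ := claim d 2 (by norm_num) (hcond 2 (Or.inl rfl))
  obtain ⟨y, hyK, hyn⟩ := claim d 3 (by norm_num) (hcond 3 (Or.inr rfl))
  have h1n : (1:ℕ) ≤ 2 ^ n - 1 := by
    have : (2:ℕ) ≤ 2 ^ n := by
      calc (2:ℕ) = 2 ^ 1 := rfl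
        _ ≤ 2 ^ n := Nat.pow_le_pow_right (by norm_num) (by omega)
    omega
  have hsepxy : ε ≤ ‖x - y‖ := by
    have := hsepK 1 le_rfl h1n x (by simpa using hxK) y (by simpa using hyK)
    exact this
  have : ‖x - y‖ ≤ 2 * (M * c ^ d) := by
    calc ‖x - y‖ ≤ ‖x‖ + ‖y‖ := norm_sub_le x y
      _ ≤ 2 * (M * c ^ d) := by linarith
  have hfin : c ^ d < ε / (2 * M) := hd
  have : ε < ε := by
    calc ε ≤ ‖x - y‖ := hsepxy
      _ ≤ 2 * (M * c ^ d) := this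
      _ < 2 * (M * (ε / (2 * M))) := by
          apply mul_lt_mul_of_pos_left _ (by norm_num : (0:ℝ) < 2)
          exact mul_lt_mul_of_pos_left hfin hM
      _ = ε := by field_simp
  exact lt_irrefl ε this
end
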